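/- Energy increment step: Let W : [0,1]² → [0,1] be symmetric measurable, R a finite measurable partition of [0,1], and suppose ‖W − W_R‖_□ > ε. Then there is a refinement R' of R, obtained by refining each part of R into at most 4 subparts, such that ‖W_{R'}‖₂² ≥ ‖W_R‖₂² + ε². -/

import Mathlib

/-!
Cut every part of `R` along the witnesses `S`, `T` of the cut-norm deviation. The stepping
`W_{R'}` has the same integral as `W` over every cell of `R'`, hence over every cell of `R` and
over `S × T`. The first makes `W_{R'} - W_R` orthogonal to `W_R`, so
`‖W_{R'}‖₂² = ‖W_R‖₂² + ‖W_{R'} - W_R‖₂²`; the second gives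
`∫_{S×T} (W_{R'} - W_R) = ∫_{S×T} (W - W_R)`, of absolute value `> ε`, and by Cauchy–Schwarz
this is at most `‖W_{R'} - W_R‖₂`.
-/

open MeasureTheory Finset
open scoped unitInterval

noncomputable section

/-- A finite measurable partition of `[0,1]`. -/
def IsPartition {ι : Type*} (Q : ι → Set I) : Prop :=
  (∀ i, MeasurableSet (Q i)) ∧ Pairwise (Function.onFun Disjoint Q) ∧
    (⋃ i, Q i) = Set.univ

/-- The average of `W` over the product cell `Q i × Q j` (with value `0` on
cells of measure zero). -/
def cellAvg {ι : Type*} (W : I → I → ℝ) (Q : ι → Set I) (i j : ι) : ℝ :=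
  if volume (Q i ×ˢ Q j) = 0 then 0
  else (∫ p : I × I in Q i ×ˢ Q j, W p.1 p.2) / (volume (Q i ×ˢ Q j)).toReal

/-- The stepping `W_Q` of `W` with respect to the partition `Q`: on each product
cell `Q i × Q j` it takes the average value of `W` over that cell. -/
def stepFn {ι : Type*} [Fintype ι] (W : I → I → ℝ) (Q : ι → Set I) (x y : I) : ℝ :=
  ∑ i : ι, ∑ j : ι, Set.indicator (Q i ×ˢ Q j) (fun _ => cellAvg W Q i j) (x, y)

/-- The cut norm in its set form: `‖U‖_□ = sup_{S,T} |∫_{S×T} U|`. -/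
def cutNormSets (U : I → I → ℝ) : ℝ :=
  sSup {r : ℝ | ∃ S T : Set I, MeasurableSet S ∧ MeasurableSet T ∧
      r = |∫ p : I × I in S ×ˢ T, U p.1 p.2|}

open scoped ENNReal

theorem integral_sq_eq_add_of_orthogonal {Ω : Type*} [MeasurableSpace Ω] {μ : Measure Ω}
    {f g : Ω → ℝ} (hf : MemLp f 2 μ) (hg : MemLp g 2 μ)
    (horth : ∫ ω, f ω * (g ω - f ω) ∂μ = 0) :
    ∫ ω, g ω ^ 2 ∂μ = ∫ ω, f ω ^ 2 ∂μ + ∫ ω, (g ω - f ω) ^ 2 ∂μ := by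
  have hgf : MemLp (fun ω => g ω - f ω) 2 μ := hg.sub hf
  have hf2 : Integrable (fun ω => f ω ^ 2) μ := hf.integrable_sq
  have hgf2 : Integrable (fun ω => (g ω - f ω) ^ 2) μ := hgf.integrable_sq
  have hsum : Integrable (fun ω => f ω ^ 2 + (g ω - f ω) ^ 2) μ := hf2.add hgf2
  have hcross : Integrable (fun ω => 2 * (f ω * (g ω - f ω))) μ :=
    (hf.integrable_mul hgf).const_mul 2
  calc ∫ ω, g ω ^ 2 ∂μ = ∫ ω, f ω ^ 2 + (g ω - f ω) ^ 2 + 2 * (f ω * (g ω - f ω)) ∂μ := by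
        congr with ω; ring
    _ = ∫ ω, f ω ^ 2 ∂μ + ∫ ω, (g ω - f ω) ^ 2 ∂μ := by
        rw [integral_add hsum hcross, integral_add hf2 hgf2, integral_const_mul, horth,
          mul_zero, add_zero]

theorem sq_integral_le_integral_sq {Ω : Type*} [MeasurableSpace Ω] {μ : Measure Ω}
    [IsProbabilityMeasure μ] {X : Ω → ℝ} (hX : MemLp X 2 μ) :
    (∫ ω, X ω ∂μ) ^ 2 ≤ ∫ ω, X ω ^ 2 ∂μ :=
  sub_nonneg.mp ((ProbabilityTheory.variance_eq_sub hX).symm ▸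
    ProbabilityTheory.variance_nonneg X μ)

theorem sq_setIntegral_le_integral_sq {Ω : Type*} [MeasurableSpace Ω] {μ : Measure Ω}
    [IsProbabilityMeasure μ] {X : Ω → ℝ} (hX : MemLp X 2 μ) {s : Set Ω} (hs : MeasurableSet s) :
    (∫ ω in s, X ω ∂μ) ^ 2 ≤ ∫ ω, X ω ^ 2 ∂μ := by
  rw [← integral_indicator hs]
  refine (sq_integral_le_integral_sq (hX.indicator hs)).trans
    (integral_mono (hX.indicator hs).integrable_sq hX.integrable_sq fun ω => ?_)
  by_cases hω : ω ∈ s <;> simp [hω, sq_nonneg]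

def IsUnionOfParts {ι : Type*} (Q : ι → Set I) (S : Set I) : Prop :=
  ∀ i, Q i ⊆ S ∨ Disjoint (Q i) S

def cutAtoms (S T : Set I) : Fin 4 → Set I :=
  (fun p : Fin 2 × Fin 2 => ![S, Sᶜ] p.1 ∩ ![T, Tᶜ] p.2) ∘
    (finProdFinEquiv : Fin 2 × Fin 2 ≃ Fin 4).symm

section Partitions

variable {ι κ : Type*} {Q : ι → Set I} {P : κ → Set I} {S T : Set I}

theorem IsPartition.exists_mem (hQ : IsPartition Q) (x : I) : ∃ i, x ∈ Q i :=
  Set.mem_iUnion.mp (hQ.2.2 ▸ Set.mem_univ x)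

theorem IsPartition.comp_equiv (hQ : IsPartition Q) (e : κ ≃ ι) : IsPartition (Q ∘ e) :=
  ⟨fun k => hQ.1 (e k), fun _ _ hkl => hQ.2.1 (e.injective.ne hkl),
    by rw [← hQ.2.2]; exact e.surjective.iUnion_comp Q⟩

theorem IsPartition.inter (hQ : IsPartition Q) (hP : IsPartition P) :
    IsPartition fun p : ι × κ => Q p.1 ∩ P p.2 := by
  refine ⟨fun p => (hQ.1 p.1).inter (hP.1 p.2), ?_, ?_⟩
  · rintro ⟨i, k⟩ ⟨j, l⟩ hne
    by_cases hij : i = j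
    · subst hij
      exact (hP.2.1 fun hkl => hne (congrArg (Prod.mk i) hkl)).mono Set.inter_subset_right
        Set.inter_subset_right
    · exact (hQ.2.1 hij).mono Set.inter_subset_left Set.inter_subset_left
  · refine Set.eq_univ_of_forall fun x => ?_
    obtain ⟨i, hi⟩ := hQ.exists_mem x
    obtain ⟨k, hk⟩ := hP.exists_mem x
    exact Set.mem_iUnion.mpr ⟨(i, k), hi, hk⟩

theorem isPartition_compl_pair (hS : MeasurableSet S) : IsPartition ![S, Sᶜ] := by
  refine ⟨Fin.forall_fin_two.mpr ⟨hS, hS.compl⟩, ?_, ?_⟩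
  · intro i j hij
    fin_cases i <;> fin_cases j <;>
      simp_all [Function.onFun, disjoint_compl_right, disjoint_compl_left]
  · ext x
    simp [Fin.exists_fin_two, em]

theorem isPartition_cutAtoms (hS : MeasurableSet S) (hT : MeasurableSet T) :
    IsPartition (cutAtoms S T) :=
  ((isPartition_compl_pair hS).inter (isPartition_compl_pair hT)).comp_equiv _

theorem isUnionOfParts_part (hQ : Pairwise (Function.onFun Disjoint Q)) (i : ι) :
    IsUnionOfParts Q (Q i) := fun j => by
  rcases eq_or_ne j i with rfl | hji
  · exact Or.inl le_rfl
  · exact Or.inr (hQ hji)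

theorem isUnionOfParts_compl_pair (S : Set I) : IsUnionOfParts ![S, Sᶜ] S :=
  Fin.forall_fin_two.mpr ⟨Or.inl le_rfl, Or.inr disjoint_compl_left⟩

theorem IsUnionOfParts.comp (h : IsUnionOfParts Q S) (f : κ → ι) :
    IsUnionOfParts (Q ∘ f) S := fun k => h (f k)

theorem IsUnionOfParts.inter_left (h : IsUnionOfParts Q S) :
    IsUnionOfParts (fun p : ι × κ => Q p.1 ∩ P p.2) S := fun p =>
  (h p.1).imp Set.inter_subset_left.trans (Disjoint.mono_left Set.inter_subset_left)

theorem IsUnionOfParts.inter_right (h : IsUnionOfParts P S) :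
    IsUnionOfParts (fun p : ι × κ => Q p.1 ∩ P p.2) S := fun p =>
  (h p.2).imp Set.inter_subset_right.trans (Disjoint.mono_left Set.inter_subset_right)

theorem isUnionOfParts_cutAtoms_left (S T : Set I) : IsUnionOfParts (cutAtoms S T) S :=
  (isUnionOfParts_compl_pair S).inter_left.comp _

theorem isUnionOfParts_cutAtoms_right (S T : Set I) : IsUnionOfParts (cutAtoms S T) T :=
  (isUnionOfParts_compl_pair T).inter_right.comp _

end Partitions

section Integrals

variable {ι : Type*} [Fintype ι] {Q : ι → Set I} {W : I → I → ℝ} {S T : Set I}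

theorem integral_eq_sum_cells (hQ : IsPartition Q) {μ : Measure (I × I)} {h : I × I → ℝ}
    (hh : Integrable h μ) :
    ∫ x, h x ∂μ = ∑ ij : ι × ι, ∫ x in Q ij.1 ×ˢ Q ij.2, h x ∂μ := by
  have hcover : (⋃ ij : ι × ι, Q ij.1 ×ˢ Q ij.2) = Set.univ := by
    rw [Set.iUnion_prod Q Q, hQ.2.2, Set.univ_prod_univ]
  have hdisj : Pairwise (Function.onFun Disjoint fun ij : ι × ι => Q ij.1 ×ˢ Q ij.2) := by
    rintro ⟨i, j⟩ ⟨i', j'⟩ hne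
    rw [Function.onFun, Set.disjoint_prod]
    by_cases hi : i = i'
    · subst hi
      exact Or.inr (hQ.2.1 fun hj => hne (congrArg (Prod.mk i) hj))
    · exact Or.inl (hQ.2.1 hi)
  calc ∫ x, h x ∂μ = ∫ x in ⋃ ij : ι × ι, Q ij.1 ×ˢ Q ij.2, h x ∂μ := by
        rw [hcover, Measure.restrict_univ]
    _ = _ := integral_iUnion_fintype (fun ij => (hQ.1 ij.1).prod (hQ.1 ij.2)) hdisj
        fun _ => hh.integrableOn

theorem setIntegral_prod_eq_of_forall_cells (hQ : IsPartition Q) {h₁ h₂ : I × I → ℝ}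
    (hh₁ : Integrable h₁) (hh₂ : Integrable h₂)
    (hcells : ∀ i j, ∫ x in Q i ×ˢ Q j, h₁ x = ∫ x in Q i ×ˢ Q j, h₂ x)
    (hS : IsUnionOfParts Q S) (hT : IsUnionOfParts Q T) :
    ∫ x in S ×ˢ T, h₁ x = ∫ x in S ×ˢ T, h₂ x := by
  rw [integral_eq_sum_cells hQ hh₁.restrict, integral_eq_sum_cells hQ hh₂.restrict]
  refine Finset.sum_congr rfl fun ⟨i, j⟩ _ => ?_
  simp only [Measure.restrict_restrict ((hQ.1 i).prod (hQ.1 j)), Set.prod_inter_prod]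
  rcases hS i with hi | hi
  · rcases hT j with hj | hj
    · rw [Set.inter_eq_left.mpr hi, Set.inter_eq_left.mpr hj]
      exact hcells i j
    · simp [Set.disjoint_iff_inter_eq_empty.mp hj]
  · simp [Set.disjoint_iff_inter_eq_empty.mp hi]

theorem stepFn_eq_cellAvg (hQ : Pairwise (Function.onFun Disjoint Q)) {i j : ι} {x y : I}
    (hx : x ∈ Q i) (hy : y ∈ Q j) : stepFn W Q x y = cellAvg W Q i j := by
  rw [stepFn, Finset.sum_eq_single i, Finset.sum_eq_single j]
  · exact Set.indicator_of_mem (Set.mk_mem_prod hx hy) _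
  · exact fun l _ hlj => Set.indicator_of_notMem
      (fun hmem => Set.disjoint_left.mp (hQ hlj) hmem.2 hy) _
  · exact fun h => (h (Finset.mem_univ j)).elim
  · exact fun k _ hki => Finset.sum_eq_zero fun l _ => Set.indicator_of_notMem
      (fun hmem => Set.disjoint_left.mp (hQ hki) hmem.1 hx) _
  · exact fun h => (h (Finset.mem_univ i)).elim

theorem setIntegral_stepFn_cell (hQm : ∀ i, MeasurableSet (Q i))
    (hQ : Pairwise (Function.onFun Disjoint Q)) (i j : ι) :
    ∫ x in Q i ×ˢ Q j, stepFn W Q x.1 x.2 = ∫ x in Q i ×ˢ Q j, W x.1 x.2 := by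
  rw [setIntegral_congr_fun ((hQm i).prod (hQm j)) fun x hx => stepFn_eq_cellAvg hQ hx.1 hx.2,
    setIntegral_const, cellAvg]
  split_ifs with h
  · rw [smul_zero, Measure.restrict_eq_zero.mpr h, integral_zero_measure]
  · rw [smul_eq_mul, Measure.real,
      mul_div_cancel₀ _ (ENNReal.toReal_pos h (measure_ne_top _ _)).ne']

theorem memLp_stepFn (W : I → I → ℝ) (hQ : ∀ i, MeasurableSet (Q i)) (p : ℝ≥0∞) :
    MemLp (fun x : I × I => stepFn W Q x.1 x.2) p :=
  memLp_finsetSum _ fun i _ => memLp_finsetSum _ fun j _ =>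
    memLp_indicator_const p ((hQ i).prod (hQ j)) _ (Or.inr (measure_ne_top _ _))

theorem integral_stepFn_mul (W : I → I → ℝ) (hQ : ∀ i, MeasurableSet (Q i)) {g : I × I → ℝ}
    (hg : Integrable g) :
    ∫ x, stepFn W Q x.1 x.2 * g x = ∑ i, ∑ j, cellAvg W Q i j * ∫ x in Q i ×ˢ Q j, g x := by
  have hint : ∀ i j, Integrable ((Q i ×ˢ Q j).indicator fun x => cellAvg W Q i j * g x) :=
    fun i j => (hg.const_mul _).indicator ((hQ i).prod (hQ j))
  simp only [stepFn, Prod.mk.eta, Finset.sum_mul, ← Set.indicator_mul_left]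
  rw [integral_finsetSum _ fun i _ => integrable_finsetSum _ fun j _ => hint i j]
  refine Finset.sum_congr rfl fun i _ => ?_
  rw [integral_finsetSum _ fun j _ => hint i j]
  refine Finset.sum_congr rfl fun j _ => ?_
  rw [integral_indicator ((hQ i).prod (hQ j)), integral_const_mul]

theorem integral_stepFn_mul_sub_eq_zero {κ : Type*} [Fintype κ] {Q' : κ → Set I}
    (hQm : ∀ i, MeasurableSet (Q i)) (hQ : Pairwise (Function.onFun Disjoint Q))
    (hQ' : ∀ k, MeasurableSet (Q' k))
    (hcells : ∀ i j, ∫ x in Q i ×ˢ Q j, stepFn W Q' x.1 x.2 = ∫ x in Q i ×ˢ Q j, W x.1 x.2) :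
    ∫ x : I × I, stepFn W Q x.1 x.2 * (stepFn W Q' x.1 x.2 - stepFn W Q x.1 x.2) = 0 := by
  have hf := (memLp_stepFn W hQm 1).integrable le_rfl
  have hf' := (memLp_stepFn W hQ' 1).integrable le_rfl
  have hdiff : Integrable fun x : I × I => stepFn W Q' x.1 x.2 - stepFn W Q x.1 x.2 :=
    hf'.sub hf
  rw [integral_stepFn_mul W hQm hdiff]
  refine Finset.sum_eq_zero fun i _ => Finset.sum_eq_zero fun j _ => ?_
  rw [integral_sub hf'.integrableOn hf.integrableOn, hcells, setIntegral_stepFn_cell hQm hQ,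
    sub_self, mul_zero]

end Integrals

theorem exists_lt_abs_setIntegral_of_lt_cutNormSets {U : I → I → ℝ} {ε : ℝ} (hε : 0 ≤ ε)
    (h : ε < cutNormSets U) :
    ∃ S T : Set I, MeasurableSet S ∧ MeasurableSet T ∧ ε < |∫ x in S ×ˢ T, U x.1 x.2| := by
  by_contra! hle
  exact h.not_ge (Real.sSup_le (by rintro _ ⟨S, T, hS, hT, rfl⟩; exact hle S T hS hT) hε)

theorem energy_increment_general {q : ℕ} (ε : ℝ) (hε : 0 < ε)
    (W : I → I → ℝ) (hWmeas : Measurable fun p : I × I => W p.1 p.2)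
    (hWrange : ∀ x y, W x y ∈ Set.Icc (0:ℝ) 1)
    (R : Fin q → Set I) (hR : IsPartition R)
    (hdev : cutNormSets (fun x y => W x y - stepFn W R x y) > ε) :
    ∃ R' : Fin q × Fin 4 → Set I, IsPartition R' ∧ (∀ p, R' p ⊆ R p.1) ∧
      (∫ p : I × I, (stepFn W R' p.1 p.2) ^ 2)
        ≥ (∫ p : I × I, (stepFn W R p.1 p.2) ^ 2) + ε ^ 2 := by
  obtain ⟨S, T, hS, hT, hST⟩ := exists_lt_abs_setIntegral_of_lt_cutNormSets hε.le hdev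
  set R' : Fin q × Fin 4 → Set I := fun p => R p.1 ∩ cutAtoms S T p.2
  have hR' : IsPartition R' := hR.inter (isPartition_cutAtoms hS hT)
  have hW : Integrable fun x : I × I => W x.1 x.2 :=
    Integrable.of_bound hWmeas.aestronglyMeasurable 1 (ae_of_all _ fun x =>
      abs_le.mpr ⟨by linarith [(hWrange x.1 x.2).1], (hWrange x.1 x.2).2⟩)
  have hf := memLp_stepFn W hR.1 2
  have hf' := memLp_stepFn W hR'.1 2
  have hfi := hf.integrable one_le_two
  have hfi' := hf'.integrable one_le_two
  have hagree {A B : Set I} (hA : IsUnionOfParts R' A) (hB : IsUnionOfParts R' B) :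
      ∫ x in A ×ˢ B, stepFn W R' x.1 x.2 = ∫ x in A ×ˢ B, W x.1 x.2 :=
    setIntegral_prod_eq_of_forall_cells hR' hfi' hW
      (setIntegral_stepFn_cell hR'.1 hR'.2.1) hA hB
  have horth := integral_stepFn_mul_sub_eq_zero hR.1 hR.2.1 hR'.1 fun i j =>
    hagree (isUnionOfParts_part hR.2.1 i).inter_left (isUnionOfParts_part hR.2.1 j).inter_left
  have hgap : ε < |∫ x in S ×ˢ T, (stepFn W R' x.1 x.2 - stepFn W R x.1 x.2)| := by
    rwa [integral_sub hfi'.integrableOn hfi.integrableOn,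
      hagree (isUnionOfParts_cutAtoms_left S T).inter_right
        (isUnionOfParts_cutAtoms_right S T).inter_right,
      ← integral_sub hW.integrableOn hfi.integrableOn]
  have hsq : (∫ x in S ×ˢ T, (stepFn W R' x.1 x.2 - stepFn W R x.1 x.2)) ^ 2
      ≤ ∫ x : I × I, (stepFn W R' x.1 x.2 - stepFn W R x.1 x.2) ^ 2 :=
    sq_setIntegral_le_integral_sq (hf'.sub hf) (hS.prod hT)
  refine ⟨R', hR', fun p => Set.inter_subset_left, ?_⟩
  rw [integral_sq_eq_add_of_orthogonal hf hf' horth, ge_iff_le, add_le_add_iff_left]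
  calc ε ^ 2 ≤ |∫ x in S ×ˢ T, (stepFn W R' x.1 x.2 - stepFn W R x.1 x.2)| ^ 2 :=
        pow_le_pow_left₀ hε.le hgap.le 2
    _ ≤ _ := by rwa [sq_abs]

/-- Energy increment: if `‖W − W_R‖_□ > ε` then there is a refinement
`R'` of `R`, refining each part of `R` into at most `4` subparts, with
`‖W_{R'}‖₂² ≥ ‖W_R‖₂² + ε²`. -/
theorem energy_increment {q : ℕ} (ε : ℝ) (hε : 0 < ε)
    (W : I → I → ℝ) (hWmeas : Measurable fun p : I × I => W p.1 p.2)
    (hWsymm : ∀ x y, W x y = W y x) (hWrange : ∀ x y, W x y ∈ Set.Icc (0:ℝ) 1)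
    (R : Fin q → Set I) (hR : IsPartition R)
    (hdev : cutNormSets (fun x y => W x y - stepFn W R x y) > ε) :
    ∃ R' : Fin q × Fin 4 → Set I, IsPartition R' ∧ (∀ p, R' p ⊆ R p.1) ∧
      (∫ p : I × I, (stepFn W R' p.1 p.2) ^ 2)
        ≥ (∫ p : I × I, (stepFn W R p.1 p.2) ^ 2) + ε ^ 2 :=
  energy_increment_general ε hε W hWmeas hWrange R hR hdev

end
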